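/- For natural numbers m, n, r with 2 ≤ m, the quantity I(m,n,r) := ∑_{s=0}^{⌊m/2⌋} (−1)^s C(r,s) C(n+m−2−2s, m−2s) satisfies I(m,n,r) = C(n+m−2, m) · ∑_{s=0}^{⌊m/2⌋} [(−r)_s (−m/2)_s ((−m+1)/2)_s] / [((−n−m+2)/2)_s ((−n−m+3)/2)_s · s!] in ℚ, provided n+m−2 ≥ m and the denominator Pochhammer symbols are nonzero for all s ≤ ⌊m/2⌋. -/

import Mathlib

/-!
The identity holds termwise. At a negative integer the rising factorial is a signed falling
factorial, `(-N)_k = (-1)^k N(N-1)⋯(N-k+1)`, and the duplication formula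
`4^s (x/2)_s ((x+1)/2)_s = (x)_{2s}` turns the two pairs of half-integer symbols into
`m↓(2s) / 4^s` and `a↓(2s) / 4^s`, where `a = n + m - 2` and `↓` is the falling factorial.
So the `s`-th summand on the right is `(-1)^s C(r,s) C(a,m) m↓(2s) / a↓(2s)`, and
`C(a,m) m↓(2s) = C(a-2s, m-2s) a↓(2s)` (both sides count `m`-subsets of an `a`-set
carrying an ordered `2s`-tuple of their elements) gives the `s`-th summand on the left.
-/

/-- Rising factorial (Pochhammer symbol) on ℚ. -/
def poch (x : ℚ) : ℕ → ℚ
  | 0 => 1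
  | k + 1 => poch x k * (x + k)

theorem poch_eq_ascPochhammer_eval (x : ℚ) (k : ℕ) :
    poch x k = (ascPochhammer ℚ k).eval x := by
  induction k with
  | zero => simp [poch]
  | succ k ih => rw [poch, ih, ascPochhammer_succ_eval]

theorem poch_neg_natCast (N k : ℕ) : poch (-(N : ℚ)) k = (-1) ^ k * N.descFactorial k := by
  rw [poch_eq_ascPochhammer_eval, ascPochhammer_eval_neg_eq_descPochhammer,
    descPochhammer_eval_eq_descFactorial]

theorem poch_half_mul_poch_half_add_one (x : ℚ) (s : ℕ) :
    poch (x / 2) s * poch ((x + 1) / 2) s * 4 ^ s = poch x (2 * s) := by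
  induction s with
  | zero => simp [poch]
  | succ s ih =>
    rw [show 2 * (s + 1) = 2 * s + 1 + 1 by ring, poch, poch, poch, poch, ← ih]
    push_cast
    ring

theorem poch_neg_half_mul_poch_neg_half_add_one (N s : ℕ) :
    poch (-(N : ℚ) / 2) s * poch ((-(N : ℚ) + 1) / 2) s = N.descFactorial (2 * s) / 4 ^ s := by
  rw [eq_div_iff (by positivity), poch_half_mul_poch_half_add_one, poch_neg_natCast,
    pow_mul, neg_one_sq, one_pow, one_mul]

theorem Nat.choose_mul_descFactorial_of_le {a m j : ℕ} (hjm : j ≤ m) :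
    a.choose m * m.descFactorial j = (a - j).choose (m - j) * a.descFactorial j := by
  rw [descFactorial_eq_factorial_mul_choose, descFactorial_eq_factorial_mul_choose,
    mul_left_comm, choose_mul hjm]
  ring

theorem dimension_hypergeometric_form_general (m n r : ℕ) (hm : 2 ≤ m) (hnm : m ≤ n + m - 2) :
    ∑ s ∈ Finset.range (m / 2 + 1),
        (-1 : ℚ) ^ s * (Nat.choose r s : ℚ)
          * (Nat.choose (n + m - 2 - 2 * s) (m - 2 * s) : ℚ)
      = (Nat.choose (n + m - 2) m : ℚ)
          * ∑ s ∈ Finset.range (m / 2 + 1),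
              poch (-(r : ℚ)) s * poch (-(m : ℚ) / 2) s * poch ((-(m : ℚ) + 1) / 2) s
                / (poch ((-(n : ℚ) - (m : ℚ) + 2) / 2) s
                    * poch ((-(n : ℚ) - (m : ℚ) + 3) / 2) s * (Nat.factorial s : ℚ)) := by
  set a := n + m - 2
  have ha : -(n : ℚ) - m + 2 = -(a : ℚ) := by
    push_cast [a, Nat.cast_sub (by omega : 2 ≤ n + m)]
    ring
  have ha' : -(n : ℚ) - m + 3 = -(a : ℚ) + 1 := by linear_combination ha
  rw [ha, ha', Finset.mul_sum]
  refine Finset.sum_congr rfl fun s hs => ?_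
  have h2s : 2 * s ≤ m := by rw [Finset.mem_range] at hs; omega
  have hdesc : (a.descFactorial (2 * s) : ℚ) ≠ 0 :=
    Nat.cast_ne_zero.mpr (Nat.descFactorial_eq_zero_iff_lt.not.mpr (by omega))
  have hchoose : (a.choose m * m.descFactorial (2 * s) : ℚ)
      = (a - 2 * s).choose (m - 2 * s) * a.descFactorial (2 * s) := by
    exact_mod_cast Nat.choose_mul_descFactorial_of_le h2s
  rw [mul_assoc (poch _ s), poch_neg_half_mul_poch_neg_half_add_one,
    poch_neg_half_mul_poch_neg_half_add_one, poch_neg_natCast,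
    Nat.descFactorial_eq_factorial_mul_choose r s]
  field_simp
  push_cast
  linear_combination -(s.factorial : ℚ) * r.choose s * hchoose

/-- Theorem 1: the alternating sum for I_{m,n}(r) in hypergeometric ₃F₂ form. -/
theorem dimension_hypergeometric_form (m n r : ℕ) (hm : 2 ≤ m) (hnm : m ≤ n + m - 2)
    (hd : ∀ s ≤ m / 2,
      poch ((-(n : ℚ) - (m : ℚ) + 2) / 2) s ≠ 0
        ∧ poch ((-(n : ℚ) - (m : ℚ) + 3) / 2) s ≠ 0) :
    ∑ s ∈ Finset.range (m / 2 + 1),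
        (-1 : ℚ) ^ s * (Nat.choose r s : ℚ)
          * (Nat.choose (n + m - 2 - 2 * s) (m - 2 * s) : ℚ)
      = (Nat.choose (n + m - 2) m : ℚ)
          * ∑ s ∈ Finset.range (m / 2 + 1),
              poch (-(r : ℚ)) s * poch (-(m : ℚ) / 2) s * poch ((-(m : ℚ) + 1) / 2) s
                / (poch ((-(n : ℚ) - (m : ℚ) + 2) / 2) s
                    * poch ((-(n : ℚ) - (m : ℚ) + 3) / 2) s * (Nat.factorial s : ℚ)) :=
  dimension_hypergeometric_form_general m n r hm hnm
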